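/- Let n ≥ 2, 1 < p, p̄₁, p̄₂ < ∞, and 0 < ε < 1. Define f_ε on ℝⁿ by f_ε(x) = 0 for |x| ≤ 1 and f_ε(x) = |x|^{-(n/p + ε)} for |x| > 1. Then ‖H f_ε‖_{L^p_{|x|}L^{p̄₂}_θ} ≥ n · ε^ε · (1 − ε^{n − ε − n/p})/(n − ε − n/p) · ω_n^{1/p̄₂ − 1/p̄₁} · ‖f_ε‖_{L^p_{|x|}L^{p̄₁}_θ}. -/

import Mathlib

open MeasureTheory Metric Set

noncomputable section

/-- Euclidean space ℝⁿ. -/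
abbrev Euc (n : ℕ) := EuclideanSpace ℝ (Fin n)

/-- Volume of the unit ball in ℝⁿ: Ω_n = π^(n/2) / Γ(1 + n/2). -/
def ballVol (n : ℕ) : ℝ := Real.pi ^ ((n : ℝ) / 2) / Real.Gamma (1 + (n : ℝ) / 2)

/-- Surface measure of the unit sphere S^{n-1}: ω_n = 2π^(n/2) / Γ(n/2). -/
def sphArea (n : ℕ) : ℝ := 2 * Real.pi ^ ((n : ℝ) / 2) / Real.Gamma ((n : ℝ) / 2)

/-- The surface measure dθ on the unit sphere S^{n-1} ⊂ ℝⁿ (total mass ω_n = n·Ω_n). -/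
def sphereMeasure (n : ℕ) : Measure (sphere (0 : Euc n) 1) :=
  (volume : Measure (Euc n)).toSphere

/-- Mixed radial-angular norm
‖f‖ = (∫₀^∞ (∫_{S^{n-1}} |f(rθ)|^{p̄} dθ)^{p/p̄} r^{n-1} dr)^{1/p}. -/
def mixedNorm (n : ℕ) (p pb : ℝ) (f : Euc n → ℝ) : ℝ :=
  (∫ r in Ioi (0 : ℝ),
      (∫ θ, |f (r • (θ : Euc n))| ^ pb ∂(sphereMeasure n)) ^ (p / pb) * r ^ ((n : ℝ) - 1)) ^ (1 / p)

/-- Weak mixed radial-angular norm: sup_{λ>0} λ‖χ_{|f|>λ}‖. -/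
def wMixedNorm (n : ℕ) (p pb : ℝ) (f : Euc n → ℝ) : ℝ :=
  ⨆ l : {l : ℝ // 0 < l},
    l.1 * mixedNorm n p pb (indicator {x | l.1 < |f x|} fun _ => (1 : ℝ))

/-- n-dimensional Hardy operator H f(x) = (Ω_n |x|ⁿ)⁻¹ ∫_{|y|<|x|} f(y) dy. -/
def hardyOp (n : ℕ) (f : Euc n → ℝ) (x : Euc n) : ℝ :=
  (ballVol n * ‖x‖ ^ n)⁻¹ * ∫ y in {y : Euc n | ‖y‖ < ‖x‖}, f y

/-- Dual Hardy operator H* f(x) = ∫_{|y|≥|x|} f(y)/(Ω_n |y|ⁿ) dy. -/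
def dualHardyOp (n : ℕ) (f : Euc n → ℝ) (x : Euc n) : ℝ :=
  ∫ y in {y : Euc n | ‖x‖ ≤ ‖y‖}, f y / (ballVol n * ‖y‖ ^ n)

/-- Fractional Hardy operator H_β f(x) = (Ω_n^{1/n}|x|)^{β-n} ∫_{|y|<|x|} f(y) dy. -/
def fracHardyOp (n : ℕ) (β : ℝ) (f : Euc n → ℝ) (x : Euc n) : ℝ :=
  (ballVol n ^ ((1 : ℝ) / n) * ‖x‖) ^ (-((n : ℝ) - β)) * ∫ y in {y : Euc n | ‖y‖ < ‖x‖}, f y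

/-- L^p norm on ℝⁿ. -/
def lpNorm (n : ℕ) (p : ℝ) (f : Euc n → ℝ) : ℝ := (∫ x : Euc n, |f x| ^ p) ^ (1 / p)

/-- Beta function B(a,b) = ∫₀¹ t^{a-1}(1-t)^{b-1} dt. -/
def betaFn (a b : ℝ) : ℝ := ∫ t in (0 : ℝ)..1, t ^ (a - 1) * (1 - t) ^ (b - 1)

/-- Sharp constant C_{p,q,n,β} = (p'/q)^{1/q}((n/(qβ))·B(n/(qβ), n/(q'β)))^{-β/n}. -/
def fracHardyConst (p q : ℝ) (n : ℕ) (β : ℝ) : ℝ :=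
  (p / (p - 1) / q) ^ (1 / q) *
    ((n / (q * β)) * betaFn ((n : ℝ) / (q * β)) ((n : ℝ) / ((q / (q - 1)) * β))) ^ (-(β / (n : ℝ)))

/-!
Both `f_ε` and `H f_ε` are radial, so by polar coordinates each mixed norm is `ω_n ^ (1/p̄)`
times the weighted norm `(∫₀^∞ |g r|^p r^(n-1) dr)^(1/p)` of the radial profile `g`.
For `f_ε` this weighted norm is `(εp)^(-1/p)`. With `α = n - ε - n/p`, the profile of `H f_ε`
is `n (r^α - 1) / (α rⁿ)` for `r > 1`, which for `r ≥ 1/ε` dominates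
`n (1 - ε^α)/α · r^(-(n/p + ε))`; integrating this minorant over `r > 1/ε` only gives the
factor `ε^ε (εp)^(-1/p)`.
-/

open Real

lemma ballVol_pos (n : ℕ) : 0 < ballVol n :=
  div_pos (rpow_pos_of_pos pi_pos _) (Gamma_pos_of_pos (by positivity))

lemma natCast_mul_ballVol {n : ℕ} (hn : 1 ≤ n) : n * ballVol n = sphArea n := by
  have h : (0 : ℝ) < n / 2 := by positivity
  rw [ballVol, sphArea, add_comm, Gamma_add_one h.ne']
  field_simp

lemma sphArea_pos {n : ℕ} (hn : 1 ≤ n) : 0 < sphArea n :=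
  natCast_mul_ballVol hn ▸ mul_pos (by exact_mod_cast hn) (ballVol_pos n)

lemma volume_real_unitBall {n : ℕ} (hn : 1 ≤ n) :
    volume.real (ball (0 : Euc n) 1) = ballVol n := by
  have : Nonempty (Fin n) := ⟨⟨0, hn⟩⟩
  have hsqrt : √π ^ n = π ^ ((n : ℝ) / 2) := by
    rw [sqrt_eq_rpow, ← rpow_natCast, ← rpow_mul pi_pos.le, one_div_mul_eq_div]
  rw [measureReal_def, EuclideanSpace.volume_ball, ENNReal.ofReal_one, one_pow, one_mul,
    Fintype.card_fin, hsqrt, add_comm, ← ballVol, ENNReal.toReal_ofReal (ballVol_pos n).le]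

lemma sphereMeasure_real_univ {n : ℕ} (hn : 1 ≤ n) :
    (sphereMeasure n).real univ = sphArea n := by
  rw [measureReal_def, sphereMeasure, Measure.toSphere_apply_univ, finrank_euclideanSpace_fin,
    ENNReal.toReal_mul, ENNReal.toReal_natCast, ← measureReal_def, volume_real_unitBall hn,
    natCast_mul_ballVol hn]

lemma mixedNorm_nonneg (n : ℕ) (p pb : ℝ) (f : Euc n → ℝ) : 0 ≤ mixedNorm n p pb f :=
  rpow_nonneg (setIntegral_nonneg measurableSet_Ioi fun _ hr =>
    mul_nonneg (rpow_nonneg (integral_nonneg fun _ => rpow_nonneg (abs_nonneg _) _) _)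
      (rpow_nonneg (le_of_lt hr) _)) _

lemma mixedNorm_comp_norm {n : ℕ} (hn : 1 ≤ n) {p pb : ℝ} (hp : p ≠ 0) (hpb : pb ≠ 0)
    (g : ℝ → ℝ) :
    mixedNorm n p pb (fun x => g ‖x‖) =
      sphArea n ^ (1 / pb) * (∫ r in Ioi 0, |g r| ^ p * r ^ ((n : ℝ) - 1)) ^ (1 / p) := by
  have hω := (sphArea_pos hn).le
  have hinner : ∀ r ∈ Ioi (0 : ℝ),
      (∫ θ, |g ‖r • (θ : Euc n)‖| ^ pb ∂sphereMeasure n) ^ (p / pb) * r ^ ((n : ℝ) - 1) =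
        sphArea n ^ (p / pb) * (|g r| ^ p * r ^ ((n : ℝ) - 1)) := by
    intro r hr
    have hθ : ∀ θ : sphere (0 : Euc n) 1, ‖r • (θ : Euc n)‖ = r := fun θ => by
      rw [norm_smul, mem_sphere_zero_iff_norm.mp θ.2, mul_one, norm_of_nonneg (le_of_lt hr)]
    simp_rw [hθ]
    rw [integral_const, smul_eq_mul, sphereMeasure_real_univ hn,
      mul_rpow hω (rpow_nonneg (abs_nonneg _) _), ← rpow_mul (abs_nonneg _),
      mul_div_cancel₀ _ hpb, mul_assoc]
  rw [mixedNorm, setIntegral_congr_fun measurableSet_Ioi hinner, integral_const_mul,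
    mul_rpow (rpow_nonneg hω _) (setIntegral_nonneg measurableSet_Ioi fun r hr =>
      mul_nonneg (rpow_nonneg (abs_nonneg _) _) (rpow_nonneg (le_of_lt hr) _)),
    ← rpow_mul hω]
  congr 2
  field_simp

lemma setIntegral_norm_lt_comp_norm {n : ℕ} (hn : 1 ≤ n) (g : ℝ → ℝ) (t : ℝ) :
    ∫ y in {y : Euc n | ‖y‖ < t}, g ‖y‖ =
      sphArea n * ∫ s in Ioo 0 t, s ^ ((n : ℝ) - 1) * g s := by
  have hpow : ∀ s : ℝ, s ^ (n - 1) = s ^ ((n : ℝ) - 1) := fun s => by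
    rw [← rpow_natCast, Nat.cast_sub hn, Nat.cast_one]
  have : Nontrivial (Euc n) :=
    Module.nontrivial_of_finrank_pos (R := ℝ) (by rw [finrank_euclideanSpace_fin]; omega)
  rw [← integral_indicator (measurableSet_lt measurable_norm measurable_const),
    show indicator {y : Euc n | ‖y‖ < t} (fun y => g ‖y‖) = fun y => (Iio t).indicator g ‖y‖
      from rfl, integral_fun_norm_addHaar, finrank_euclideanSpace_fin, volume_real_unitBall hn,
    nsmul_eq_mul, smul_eq_mul, ← mul_assoc, natCast_mul_ballVol hn]
  simp_rw [smul_eq_mul, ← indicator_mul_right _ (fun s : ℝ => s ^ (n - 1)), hpow]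
  rw [setIntegral_indicator measurableSet_Iio, Ioi_inter_Iio]

lemma hardyOp_comp_norm {n : ℕ} (hn : 1 ≤ n) (g : ℝ → ℝ) (x : Euc n) :
    hardyOp n (fun y => g ‖y‖) x =
      n * (‖x‖ ^ n)⁻¹ * ∫ s in Ioo 0 ‖x‖, s ^ ((n : ℝ) - 1) * g s := by
  rw [hardyOp, setIntegral_norm_lt_comp_norm hn, ← natCast_mul_ballVol hn, mul_inv]
  field_simp [(ballVol_pos n).ne']

lemma rpow_sub_one_div_nonneg {x : ℝ} (hx : 1 ≤ x) (α : ℝ) : 0 ≤ (x ^ α - 1) / α := by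
  rcases le_or_gt 0 α with h | h
  · exact div_nonneg (sub_nonneg.mpr (one_le_rpow hx h)) h
  · exact div_nonneg_of_nonpos (sub_nonpos.mpr (rpow_le_one_of_one_le_of_nonpos hx h.le)) h.le

lemma one_sub_rpow_div_nonneg {c : ℝ} (hc0 : 0 < c) (hc1 : c ≤ 1) (α : ℝ) :
    0 ≤ (1 - c ^ α) / α := by
  rcases le_or_gt 0 α with h | h
  · exact div_nonneg (sub_nonneg.mpr (rpow_le_one hc0.le hc1 h)) h
  · exact div_nonneg_of_nonpos
      (sub_nonpos.mpr (one_le_rpow_of_pos_of_le_one_of_nonpos hc0 hc1 h.le)) h.le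

lemma one_sub_rpow_div_mul_rpow_le {c r : ℝ} (hc : 0 < c) (hcr : 1 ≤ c * r) (α : ℝ) :
    (1 - c ^ α) / α * r ^ α ≤ (r ^ α - 1) / α := by
  have hr : 0 < r := pos_of_mul_pos_right (one_pos.trans_le hcr) hc.le
  have h := rpow_sub_one_div_nonneg hcr α
  rw [mul_rpow hc.le hr.le] at h
  have hdiff : (r ^ α - 1) / α - (1 - c ^ α) / α * r ^ α = (c ^ α * r ^ α - 1) / α := by ring
  linarith

lemma abs_rpow_sub_one_div_le {r : ℝ} (hr : 1 ≤ r) (α : ℝ) :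
    |(r ^ α - 1) / α| ≤ r ^ max α 0 / |α| := by
  rw [abs_div]
  gcongr
  exact abs_sub_le_of_nonneg_of_le (rpow_nonneg (by linarith) _)
    (rpow_le_rpow_of_exponent_le hr (le_max_left _ _)) zero_le_one
    (one_le_rpow hr (le_max_right _ _))

lemma setIntegral_Ioo_rpow_sub_one {α t : ℝ} (hα : α ≠ 0) (ht : 1 ≤ t) :
    ∫ s in Ioo 1 t, s ^ (α - 1) = (t ^ α - 1) / α := by
  rw [← integral_Ioc_eq_integral_Ioo, ← intervalIntegral.integral_of_le ht,
    integral_rpow (Or.inr ⟨by contrapose! hα; linarith, notMem_uIcc_of_lt one_pos (by linarith)⟩),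
    sub_add_cancel, one_rpow]

def powerTail (β t : ℝ) : ℝ := if t ≤ 1 then 0 else t ^ (-β)

lemma setIntegral_rpow_mul_powerTail (d β t : ℝ) :
    ∫ s in Ioo 0 t, s ^ (d - 1) * powerTail β s = ∫ s in Ioo 1 t, s ^ (d - β - 1) := by
  have hcongr : ∀ s ∈ Ioo 0 t, s ^ (d - 1) * powerTail β s =
      (Ioi 1).indicator (fun s => s ^ (d - β - 1)) s := by
    intro s hs
    by_cases h : s ≤ 1
    · simp [powerTail, h]
    · rw [powerTail, if_neg h, indicator_of_mem (show s ∈ Ioi 1 from not_le.mp h),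
        ← rpow_add hs.1]
      ring_nf
  rw [setIntegral_congr_fun measurableSet_Ioo hcongr, setIntegral_indicator measurableSet_Ioi,
    Ioo_inter_Ioi, max_eq_right zero_le_one]

lemma setIntegral_abs_powerTail_rpow {β p : ℝ} (hp : 0 < p) {d : ℝ} (hd : d < β * p) :
    ∫ r in Ioi 0, |powerTail β r| ^ p * r ^ (d - 1) = (β * p - d)⁻¹ := by
  have hcongr : ∀ r ∈ Ioi (0 : ℝ), |powerTail β r| ^ p * r ^ (d - 1) =
      (Ioi 1).indicator (fun r => r ^ (d - β * p - 1)) r := by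
    intro r hr
    by_cases h : r ≤ 1
    · simp [powerTail, h, zero_rpow hp.ne']
    · rw [powerTail, if_neg h, indicator_of_mem (show r ∈ Ioi 1 from not_le.mp h),
        abs_of_nonneg (rpow_nonneg (le_of_lt hr) _), ← rpow_mul (le_of_lt hr),
        ← rpow_add hr]
      ring_nf
  rw [setIntegral_congr_fun measurableSet_Ioi hcongr, setIntegral_indicator measurableSet_Ioi,
    Ioi_inter_Ioi, max_eq_right zero_le_one, integral_Ioi_rpow_of_lt (by linarith) one_pos,
    one_rpow, sub_add_cancel, ← neg_sub, div_neg, neg_div, neg_neg, one_div]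

def hardyTail (n : ℕ) (α t : ℝ) : ℝ := if t ≤ 1 then 0 else n * ((t ^ α - 1) / α) / t ^ n

lemma hardyOp_powerTail {n : ℕ} (hn : 1 ≤ n) {β : ℝ} (hα : (n : ℝ) - β ≠ 0) (x : Euc n) :
    hardyOp n (fun y => powerTail β ‖y‖) x = hardyTail n ((n : ℝ) - β) ‖x‖ := by
  rw [hardyOp_comp_norm hn, setIntegral_rpow_mul_powerTail, hardyTail]
  split_ifs with h
  · rw [Ioo_eq_empty (not_lt.mpr h), Measure.restrict_empty, integral_zero_measure, mul_zero]
  · rw [setIntegral_Ioo_rpow_sub_one hα (le_of_lt (not_le.mp h))]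
    ring

lemma abs_hardyTail_le {n : ℕ} {α r : ℝ} (hr : 1 < r) :
    |hardyTail n α r| ≤ n / |α| * r ^ (max α 0 - n) := by
  have hr0 : 0 < r := one_pos.trans hr
  rw [hardyTail, if_neg (not_le.mpr hr), abs_div, abs_mul, Nat.abs_cast,
    abs_of_pos (pow_pos hr0 n), rpow_sub hr0, rpow_natCast]
  calc (n : ℝ) * |(r ^ α - 1) / α| / r ^ n ≤ n * (r ^ max α 0 / |α|) / r ^ n := by
        gcongr
        exact abs_rpow_sub_one_div_le hr.le α
    _ = n / |α| * (r ^ max α 0 / r ^ n) := by ring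

lemma mul_rpow_le_hardyTail {n : ℕ} {α c r : ℝ} (hc0 : 0 < c) (hc1 : c < 1)
    (hcr : 1 ≤ c * r) :
    n * ((1 - c ^ α) / α) * r ^ (α - n) ≤ hardyTail n α r := by
  have hr : 1 < r := by nlinarith
  have hr0 : 0 < r := one_pos.trans hr
  rw [hardyTail, if_neg (not_le.mpr hr), rpow_sub hr0, rpow_natCast, ← mul_div_assoc,
    mul_assoc]
  gcongr
  exact one_sub_rpow_div_mul_rpow_le hc0 hcr α

lemma integrableOn_abs_hardyTail_rpow {n : ℕ} (hn : 1 ≤ n) {α p : ℝ} (hp : 1 < p)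
    (hα : α < n - n / p) :
    IntegrableOn (fun r => |hardyTail n α r| ^ p * r ^ ((n : ℝ) - 1)) (Ioi 0) := by
  have hp0 : 0 < p := one_pos.trans hp
  have hn0 : (0 : ℝ) < n := by exact_mod_cast hn
  have hγ : (max α 0 - n) * p + (n - 1) < -1 := by
    rcases le_or_gt α 0 with h | h
    · rw [max_eq_right h]; nlinarith
    · rw [max_eq_left h.le]
      have : α * p < n * p - n := by
        calc α * p < (n - n / p) * p := by gcongr
          _ = n * p - n := by field_simp
      linarith
  set γ := (max α 0 - n) * p + (n - 1)
  rw [← Ioc_union_Ioi_eq_Ioi zero_le_one]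
  refine (integrableOn_zero.congr_fun (fun r hr => ?_) measurableSet_Ioc).union ?_
  · simp [hardyTail, hr.2, zero_rpow hp0.ne']
  refine ((integrableOn_Ioi_rpow_of_lt hγ one_pos).const_mul ((n / |α|) ^ p)).mono' ?_ ?_
  · have : Measurable (hardyTail n α) :=
      Measurable.ite measurableSet_Iic measurable_const (by fun_prop)
    fun_prop
  filter_upwards [ae_restrict_mem measurableSet_Ioi] with r (hr : 1 < r)
  have hr0 : 0 < r := one_pos.trans hr
  rw [norm_of_nonneg (by positivity)]
  calc |hardyTail n α r| ^ p * r ^ ((n : ℝ) - 1)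
      ≤ (n / |α| * r ^ (max α 0 - n)) ^ p * r ^ ((n : ℝ) - 1) := by
        gcongr
        exact abs_hardyTail_le hr
    _ = (n / |α|) ^ p * r ^ γ := by
        rw [mul_rpow (by positivity) (by positivity), ← rpow_mul hr0.le, mul_assoc,
          ← rpow_add hr0]

lemma le_setIntegral_abs_hardyTail_rpow {n : ℕ} (hn : 1 ≤ n) {p ε α : ℝ} (hp : 1 < p)
    (hε0 : 0 < ε) (hε1 : ε < 1) (hα : α = n - ε - n / p) :
    (n * ε ^ ε * ((1 - ε ^ α) / α)) ^ p * (ε * p)⁻¹ ≤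
      ∫ r in Ioi 0, |hardyTail n α r| ^ p * r ^ ((n : ℝ) - 1) := by
  have hp0 : 0 < p := one_pos.trans hp
  have hK : 0 ≤ (1 - ε ^ α) / α := one_sub_rpow_div_nonneg hε0 hε1.le α
  have hinv : 1 < ε⁻¹ := (one_lt_inv₀ hε0).mpr hε1
  have hexp : (α - n) * p + (n - 1) = -1 - ε * p := by
    rw [hα]
    field_simp
    ring
  have hint := integrableOn_abs_hardyTail_rpow hn hp (α := α) (by rw [hα]; linarith)
  calc (n * ε ^ ε * ((1 - ε ^ α) / α)) ^ p * (ε * p)⁻¹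
      = ∫ r in Ioi ε⁻¹, (n * ((1 - ε ^ α) / α)) ^ p * r ^ (-1 - ε * p) := by
        rw [integral_const_mul, integral_Ioi_rpow_of_lt (by nlinarith) (by positivity),
          show -1 - ε * p + 1 = -(ε * p) by ring, inv_rpow hε0.le, rpow_neg hε0.le, inv_inv,
          neg_div_neg_eq, mul_right_comm, mul_rpow (by positivity) (by positivity),
          ← rpow_mul hε0.le]
        ring
    _ ≤ ∫ r in Ioi ε⁻¹, |hardyTail n α r| ^ p * r ^ ((n : ℝ) - 1) := by
        refine setIntegral_mono_on
          ((integrableOn_Ioi_rpow_of_lt (by nlinarith) (by positivity)).const_mul _)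
          (hint.mono_set (Ioi_subset_Ioi (by positivity))) measurableSet_Ioi fun r hr => ?_
        have hr0 : 0 < r := (zero_lt_one.trans hinv).trans hr
        have hlow := mul_rpow_le_hardyTail (n := n) (α := α) hε0 hε1
          ((inv_le_iff_one_le_mul₀' hε0).mp (le_of_lt hr))
        calc (n * ((1 - ε ^ α) / α)) ^ p * r ^ (-1 - ε * p)
            = (n * ((1 - ε ^ α) / α) * r ^ (α - n)) ^ p * r ^ ((n : ℝ) - 1) := by
              rw [mul_rpow (x := n * ((1 - ε ^ α) / α)) (by positivity) (by positivity),
                ← rpow_mul hr0.le, mul_assoc, ← rpow_add hr0, hexp]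
          _ ≤ |hardyTail n α r| ^ p * r ^ ((n : ℝ) - 1) := by
              gcongr
              exact hlow.trans (le_abs_self _)
    _ ≤ ∫ r in Ioi 0, |hardyTail n α r| ^ p * r ^ ((n : ℝ) - 1) := by
        refine setIntegral_mono_set hint ?_ (Ioi_subset_Ioi (by positivity)).eventuallyLE
        filter_upwards [ae_restrict_mem measurableSet_Ioi] with r (hr : 0 < r)
        positivity

/-- lower bound for the mixed radial-angular norm of H f_ε. -/
theorem hardy_f_eps_lower (n : ℕ) (hn : 2 ≤ n) (p pb1 pb2 ε : ℝ)
    (hp : 1 < p) (hpb1 : 1 < pb1) (hpb2 : 1 < pb2) (hε0 : 0 < ε) (hε1 : ε < 1) :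
    mixedNorm n p pb2
        (hardyOp n fun x : Euc n => if ‖x‖ ≤ 1 then 0 else ‖x‖ ^ (-((n : ℝ) / p + ε)))
      ≥ n * ε ^ ε * ((1 - ε ^ ((n : ℝ) - ε - n / p)) / ((n : ℝ) - ε - n / p)) *
          sphArea n ^ (1 / pb2 - 1 / pb1) *
          mixedNorm n p pb1
            (fun x : Euc n => if ‖x‖ ≤ 1 then 0 else ‖x‖ ^ (-((n : ℝ) / p + ε))) := by
  have hn1 : 1 ≤ n := by omega
  have hp0 : 0 < p := one_pos.trans hp
  set α := (n : ℝ) - ε - n / p with hα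
  rcases eq_or_ne α 0 with h0 | h0
  -- at `α = 0` the constant `(1 - ε ^ α) / α` is the junk value `x / 0 = 0`
  · rw [h0, div_zero, mul_zero, zero_mul, zero_mul]
    exact mixedNorm_nonneg _ _ _ _
  have hβ : (n : ℝ) - (n / p + ε) = α := by rw [hα]; ring
  have hH : hardyOp n (fun x : Euc n => powerTail (n / p + ε) ‖x‖) =
      fun x => hardyTail n α ‖x‖ :=
    funext fun x => hβ ▸ hardyOp_powerTail hn1 (hβ ▸ h0) x
  have hω := sphArea_pos hn1
  have hC : 0 ≤ n * ε ^ ε * ((1 - ε ^ α) / α) := by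
    have := one_sub_rpow_div_nonneg hε0 hε1.le α
    positivity
  have hεp : (n / p + ε) * p - n = ε * p := by field_simp; ring
  change mixedNorm n p pb2 (hardyOp n fun x : Euc n => powerTail (n / p + ε) ‖x‖) ≥
    n * ε ^ ε * ((1 - ε ^ α) / α) * sphArea n ^ (1 / pb2 - 1 / pb1) *
      mixedNorm n p pb1 (fun x : Euc n => powerTail (n / p + ε) ‖x‖)
  rw [hH, mixedNorm_comp_norm hn1 hp0.ne' (by positivity),
    mixedNorm_comp_norm hn1 hp0.ne' (by positivity),
    setIntegral_abs_powerTail_rpow hp0 (by nlinarith), hεp, ge_iff_le]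
  calc _ = sphArea n ^ (1 / pb2) *
        ((n * ε ^ ε * ((1 - ε ^ α) / α)) ^ p * (ε * p)⁻¹) ^ (1 / p) := by
        rw [mul_rpow (rpow_nonneg hC _) (by positivity), ← rpow_mul hC,
          mul_one_div_cancel hp0.ne', rpow_one, rpow_sub hω]
        field_simp
    _ ≤ _ := by
        gcongr
        exact le_setIntegral_abs_hardyTail_rpow hn1 hp hε0 hε1 hα

end
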